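/- arXiv:2507.15751 — 3 statements merged into one kernel-verified Lean document; each statement's English description precedes it below -/
import Mathlib

section
/- Let (P_n) be a sequence of polynomials with nonnegative real coefficients such that P_n(1) → ∞, and let (Q_n) be a sequence of real polynomials such that P_n + Q_n has nonnegative coefficients and Q_n(1) ≥ 0 for all n. Let X_n be the ℕ-valued random variable with probability generating function P_n(x)/P_n(1) and X'_n the one with probability generating function (P_n(x)+Q_n(x))/(P_n(1)+Q_n(1)). If Σ(Q_n) = o(P_n(1)), where Σ(Q) is the sum of absolute values of the coefficients of Q, then the total variation distance between the laws of X_n and X'_n tends to 0 as n → ∞. -/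
open Filter

/-- If `P_n(1) → ∞`, `P_n` and `P_n + Q_n` have nonnegative coefficients, `Q_n(1) ≥ 0`, and
`Σ(Q_n) = o(P_n(1))`, then the total variation distance between the law with pgf
`P_n(x)/P_n(1)` and the law with pgf `(P_n(x)+Q_n(x))/(P_n(1)+Q_n(1))` tends to `0`. -/
theorem stmt_2 (P Q : ℕ → Polynomial ℝ)
    (hP : ∀ n k, 0 ≤ (P n).coeff k)
    (hPQ : ∀ n k, 0 ≤ (P n + Q n).coeff k)
    (hQ1 : ∀ n, 0 ≤ (Q n).eval 1)
    (hPinf : Tendsto (fun n => (P n).eval 1) atTop atTop)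
    (hSigma : Tendsto (fun n =>
      (∑ k ∈ (Q n).support, |(Q n).coeff k|) / (P n).eval 1) atTop (nhds 0)) :
    Tendsto (fun n => (1 / 2 : ℝ) * ∑' k : ℕ,
        |(P n + Q n).coeff k / ((P n).eval 1 + (Q n).eval 1)
          - (P n).coeff k / (P n).eval 1|)
      atTop (nhds 0) := by
  apply tendsto_of_tendsto_of_tendsto_of_le_of_le' tendsto_const_nhds hSigma
  · filter_upwards with n
    exact mul_nonneg (by norm_num) (tsum_nonneg fun k => abs_nonneg _)
  · filter_upwards [hPinf.eventually_gt_atTop 0] with n hS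
    set S : ℝ := (P n).eval 1 with hSdef
    set T : ℝ := (Q n).eval 1 with hTdef
    have hT : 0 ≤ T := hQ1 n
    have hST : 0 < S + T := by linarith
    set Sig : ℝ := ∑ k ∈ (Q n).support, |(Q n).coeff k| with hSigdef
    have hSign : 0 ≤ Sig := Finset.sum_nonneg fun k _ => abs_nonneg _
    -- T ≤ Sig
    have hTSig : T ≤ Sig := by
      rw [hTdef, hSigdef, Polynomial.eval_eq_sum, Polynomial.sum_def]
      simp only [one_pow, mul_one]
      exact Finset.sum_le_sum fun k _ => le_abs_self _
    -- eval of P at 1 is sum of coefficients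
    have hSsum : S = ∑ k ∈ (P n).support, (P n).coeff k := by
      rw [hSdef, Polynomial.eval_eq_sum, Polynomial.sum_def]
      simp only [one_pow, mul_one]
    -- the finite support set
    set s : Finset ℕ := (P n).support ∪ (Q n).support with hsdef
    have htsum : ∑' k : ℕ, |(P n + Q n).coeff k / (S + T) - (P n).coeff k / S|
        = ∑ k ∈ s, |(P n + Q n).coeff k / (S + T) - (P n).coeff k / S| := by
      apply tsum_eq_sum
      intro k hk
      rw [hsdef, Finset.mem_union, not_or] at hk
      have h1 : (P n).coeff k = 0 := Polynomial.notMem_support_iff.mp hk.1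
      have h2 : (Q n).coeff k = 0 := Polynomial.notMem_support_iff.mp hk.2
      simp [Polynomial.coeff_add, h1, h2]
    rw [htsum]
    -- pointwise bound
    have hpt : ∀ k ∈ s, |(P n + Q n).coeff k / (S + T) - (P n).coeff k / S|
        ≤ |(Q n).coeff k| / S + (P n).coeff k * T / (S * (S + T)) := by
      intro k _
      set a : ℝ := (P n).coeff k
      set b : ℝ := (Q n).coeff k
      have ha : 0 ≤ a := hP n k
      have heq : (P n + Q n).coeff k / (S + T) - a / S
          = b / (S + T) - a * T / (S * (S + T)) := by
        rw [Polynomial.coeff_add]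
        field_simp
        ring
      rw [heq]
      calc |b / (S + T) - a * T / (S * (S + T))|
          ≤ |b / (S + T)| + |a * T / (S * (S + T))| := abs_sub _ _
        _ ≤ |b| / S + a * T / (S * (S + T)) := by
            rw [abs_div, abs_of_pos hST,
              abs_of_nonneg (div_nonneg (mul_nonneg ha hT) (mul_nonneg hS.le hST.le))]
            gcongr
            all_goals first | positivity | linarith
    calc (1 / 2 : ℝ) * ∑ k ∈ s, |(P n + Q n).coeff k / (S + T) - (P n).coeff k / S|
        ≤ (1 / 2 : ℝ) * ∑ k ∈ s, (|(Q n).coeff k| / S + (P n).coeff k * T / (S * (S + T))) := by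
          exact mul_le_mul_of_nonneg_left (Finset.sum_le_sum hpt) (by norm_num)
      _ ≤ Sig / S := by
          rw [Finset.sum_add_distrib]
          have e1 : ∑ k ∈ s, |(Q n).coeff k| / S = (∑ k ∈ s, |(Q n).coeff k|) / S := by
            rw [Finset.sum_div]
          have e2 : ∑ k ∈ s, |(Q n).coeff k| = Sig := by
            rw [hSigdef]
            apply (Finset.sum_subset (Finset.subset_union_right) _).symm
            intro k _ hk
            simp [Polynomial.notMem_support_iff.mp hk]
          have e3 : ∑ k ∈ s, (P n).coeff k * T / (S * (S + T)) = S * T / (S * (S + T)) := by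
            rw [← Finset.sum_div, ← Finset.sum_mul]
            congr 2
            rw [hSsum]
            apply (Finset.sum_subset (Finset.subset_union_left) ?_).symm
            intro k _ hk
            exact Polynomial.notMem_support_iff.mp hk
          rw [e1, e2, e3]
          have e4 : S * T / (S * (S + T)) = T / (S + T) := by
            rw [mul_div_mul_left _ _ hS.ne']
          rw [e4]
          have h5 : T / (S + T) ≤ Sig / S := by
            rw [div_le_div_iff₀ hST hS]
            nlinarith
          linarith
end

section
/- Let D_n(x) satisfy D_0 = 1, D_1 = 2, D_n = 2D_{n-1} + 8x D_{n-2}, and let S_n(x) = 2x·D_{n-1}(x) for n ≥ 1 with S_0 = 0. Then S_n(x) = ∑_{k=0}^{⌊(n-1)/2⌋} C(n−k−1, k) · 2^{n+k} · x^{k+1} for all n ≥ 1, and moreover D_n(1) ≥ S_n(1) for all n ≥ 0. -/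
open Polynomial

/-- Explicit formula for `S_n(x) = 2x·D_{n-1}(x)`:
`S_n(x) = ∑_{k=0}^{⌊(n-1)/2⌋} C(n-k-1,k) 2^{n+k} x^{k+1}`, and `D_n(1) ≥ S_n(1)`. -/
theorem stmt_6 (D S : ℕ → Polynomial ℤ)
    (h0 : D 0 = 1) (h1 : D 1 = 2)
    (hrec : ∀ n : ℕ, D (n + 2) = 2 * D (n + 1) + 8 * X * D n)
    (hS0 : S 0 = 0)
    (hS : ∀ n : ℕ, 1 ≤ n → S n = 2 * X * D (n - 1)) :
    (∀ n : ℕ, 1 ≤ n → S n = ∑ k ∈ Finset.range ((n - 1) / 2 + 1),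
        C (((n - k - 1).choose k : ℤ) * 2 ^ (n + k)) * X ^ (k + 1)) ∧
    (∀ n : ℕ, (S n).eval 1 ≤ (D n).eval 1) := by
  -- Explicit formula for D
  have hD : ∀ m : ℕ, D m = ∑ k ∈ Finset.range (m + 1),
      C (((m - k).choose k : ℤ) * 2 ^ (m + k)) * X ^ k := by
    intro m
    induction m using Nat.strong_induction_on with
    | _ m ih =>
      match m, ih with
      | 0, _ => simp [h0]
      | 1, _ =>
        rw [h1]
        rw [Finset.sum_range_succ, Finset.sum_range_one]
        norm_num
      | (m+2), ih =>
        rw [hrec m, ih (m+1) (by omega), ih m (by omega)]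
        conv_rhs => rw [Finset.sum_range_succ' _ (m+2)]
        conv_rhs => rw [Finset.sum_range_succ _ (m+1)]
        conv_lhs => rw [Finset.sum_range_succ' _ (m+1)]
        rw [mul_add, Finset.mul_sum, Finset.mul_sum]
        have hzero : C (((m + 2 - (m + 1 + 1)).choose (m + 1 + 1) : ℤ) * 2 ^ (m + 2 + (m + 1 + 1))) * X ^ (m + 1 + 1) = 0 := by
          have : m + 2 - (m + 1 + 1) = 0 := by omega
          rw [this, Nat.choose_eq_zero_of_lt (by omega)]
          simp
        rw [hzero, add_zero]
        have hconst : 2 * (C (((m + 1 - 0).choose 0 : ℤ) * 2 ^ (m + 1 + 0)) * X ^ 0)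
            = C (((m + 2 - 0).choose 0 : ℤ) * 2 ^ (m + 2 + 0)) * X ^ 0 := by
          simp only [Nat.sub_zero, Nat.choose_zero_right, Nat.cast_one, one_mul,
            Nat.add_zero, pow_zero, mul_one]
          rw [pow_succ, C_mul]
          norm_num
          ring
        have hsum : (∑ k ∈ Finset.range (m+1),
              2 * (C (((m + 1 - (k+1)).choose (k+1) : ℤ) * 2 ^ (m + 1 + (k+1))) * X ^ (k+1)))
            + (∑ k ∈ Finset.range (m+1),
              8 * X * (C (((m - k).choose k : ℤ) * 2 ^ (m + k)) * X ^ k))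
            = ∑ k ∈ Finset.range (m+1),
              C (((m + 2 - (k+1)).choose (k+1) : ℤ) * 2 ^ (m + 2 + (k+1))) * X ^ (k+1) := by
          rw [← Finset.sum_add_distrib]
          apply Finset.sum_congr rfl
          intro k hk
          have hkey : ((m + 2 - (k + 1)).choose (k + 1) : ℤ) * 2 ^ (m + 2 + (k + 1))
              = 2 * (((m + 1 - (k + 1)).choose (k + 1) : ℤ) * 2 ^ (m + 1 + (k + 1)))
                + 8 * (((m - k).choose k : ℤ) * 2 ^ (m + k)) := by
            have h1 : m + 2 - (k + 1) = (m - k) + 1 ∨ (m + 2 - (k + 1) = 0 ∧ m - k = 0 ∧ k ≥ 1) := by omega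
            rcases h1 with h1 | ⟨h1, h2, h3⟩
            · rw [h1, Nat.choose_succ_succ']
              have h2 : m + 1 - (k + 1) = m - k := by omega
              rw [h2]
              push_cast
              have e1 : (2:ℤ) ^ (m + 2 + (k + 1)) = 2 ^ (m + 1 + (k + 1)) * 2 := by ring
              have e2 : (2:ℤ) ^ (m + 1 + (k + 1)) = 2 ^ (m + k) * 4 := by
                rw [show m + 1 + (k + 1) = m + k + 2 by omega]; ring
              rw [e1, e2]
              ring
            · rw [h1, h2, Nat.choose_eq_zero_of_lt (by omega),
                Nat.choose_eq_zero_of_lt (by omega), Nat.choose_eq_zero_of_lt (by omega)]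
              simp
          have hC2 : (C 2 : Polynomial ℤ) = 2 := by norm_num
          have hC8 : (C 8 : Polynomial ℤ) = 8 := by norm_num
          rw [hkey]
          simp only [C_add, C_mul, C_pow, hC2, hC8]
          ring
        linear_combination hsum + hconst
  -- eval positivity / growth
  have hpos : ∀ n : ℕ, 0 ≤ (D n).eval 1 ∧ 0 ≤ (D (n+1)).eval 1 := by
    intro n
    induction n with
    | zero => constructor <;> simp [h0, h1]
    | succ n ih =>
      refine ⟨ih.2, ?_⟩
      rw [hrec n]
      simp only [eval_add, eval_mul, eval_ofNat, eval_X]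
      nlinarith [ih.1, ih.2]
  have hstep : ∀ n : ℕ, 2 * (D n).eval 1 ≤ (D (n+1)).eval 1 := by
    intro n
    cases n with
    | zero => simp [h0, h1]
    | succ n =>
      rw [hrec n]
      simp only [eval_add, eval_mul, eval_ofNat, eval_X]
      nlinarith [(hpos n).1]
  constructor
  · intro n hn
    obtain ⟨m, rfl⟩ : ∃ m, n = m + 1 := ⟨n - 1, by omega⟩
    rw [hS _ hn]
    simp only [Nat.add_sub_cancel]
    rw [hD m, Finset.mul_sum]
    rw [show (∑ k ∈ Finset.range (m / 2 + 1),
        C (((m + 1 - k - 1).choose k : ℤ) * 2 ^ (m + 1 + k)) * X ^ (k + 1))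
      = ∑ k ∈ Finset.range (m + 1),
        C (((m + 1 - k - 1).choose k : ℤ) * 2 ^ (m + 1 + k)) * X ^ (k + 1) from ?_]
    · apply Finset.sum_congr rfl
      intro k hk
      have h1 : m + 1 - k - 1 = m - k := by omega
      have hC2 : (C 2 : Polynomial ℤ) = 2 := by norm_num
      rw [h1, show m + 1 + k = (m + k) + 1 by omega]
      simp only [C_mul, C_pow, hC2, pow_succ]
      ring
    · apply Finset.sum_subset
      · intro k hk
        simp only [Finset.mem_range] at *
        omega
      · intro k hk1 hk2
        simp only [Finset.mem_range, not_lt] at *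
        have : m + 1 - k - 1 = m - k := by omega
        rw [this, Nat.choose_eq_zero_of_lt (by omega)]
        simp
  · intro n
    cases n with
    | zero => simp [hS0, h0]
    | succ n =>
      rw [hS (n+1) (by omega)]
      simp only [Nat.add_sub_cancel, eval_mul, eval_ofNat, eval_X]
      have := hstep n
      linarith
end

section
/- Let Γ(x,y) = A(x,y)/B(x,y) where B(x,y) = (1 − 4xy^2)(1 − 4y − 12xy^2)(1 − 2y − 12xy^2). Then for every real x > 0, the root r(x) = 1/(2(1 + √(1+3x))) of the factor 1 − 4y − 12xy^2 = 0 satisfies: r(x) is a root of B(x,·), and r(x) has strictly smaller absolute value than every other root of B(x,·), namely the roots y = ±1/(2√x) and y = (±√(1+12x) − 1)/(12x) and the other root of 1 − 4y − 12xy^2. -/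
/-!
The factor `q(y) = 1 - 4y - 12xy²` is strictly decreasing on `[0, ∞)` and vanishes at `r > 0`, so
`r < |y|` as soon as `q(|y|) < 0`. At a root of `1 - 4xy²` one has `q(|y|) = -2 - 4|y|`, and at a
root of `1 - 2y - 12xy²` one has `q(|y|) = 2y - 4|y|`, both negative. The other root of `q` is
`-r - 1/(3x) < -r` by Vieta.
-/

section Quadratics

variable {x r y : ℝ}

theorem quadratic_eq_zero_of_eq_one_div_two_one_add_sqrt (hx : 0 ≤ 1 + 3 * x)
    (hr : r = 1 / (2 * (1 + Real.sqrt (1 + 3 * x)))) :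
    1 - 4 * r - 12 * x * r ^ 2 = 0 := by
  have hs : Real.sqrt (1 + 3 * x) ^ 2 = 1 + 3 * x := Real.sq_sqrt hx
  have : 1 + Real.sqrt (1 + 3 * x) ≠ 0 := by positivity
  subst hr
  field_simp
  linear_combination 4 * hs

theorem lt_of_quadratic_eq_zero_of_quadratic_neg (hx : 0 ≤ x) (hy : 0 ≤ y)
    (hr : 1 - 4 * r - 12 * x * r ^ 2 = 0) (hqy : 1 - 4 * y - 12 * x * y ^ 2 < 0) : r < y := by
  by_contra! hyr
  nlinarith [mul_le_mul_of_nonneg_left (mul_le_mul hyr hyr hy (hy.trans hyr)) hx]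

theorem quadratic_abs_neg_of_one_sub_four_mul_sq_eq_zero (hy : 1 - 4 * x * y ^ 2 = 0) :
    1 - 4 * |y| - 12 * x * |y| ^ 2 < 0 := by
  rw [sq_abs]
  nlinarith [abs_nonneg y]

theorem quadratic_abs_neg_of_one_sub_two_mul_sub_eq_zero (hy : 1 - 2 * y - 12 * x * y ^ 2 = 0) :
    1 - 4 * |y| - 12 * x * |y| ^ 2 < 0 := by
  have hy0 : y ≠ 0 := by rintro rfl; norm_num at hy
  rw [sq_abs]
  rcases hy0.lt_or_gt with hneg | hpos
  · rw [abs_of_neg hneg]; linarith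
  · rw [abs_of_pos hpos]; linarith

theorem lt_neg_of_quadratic_eq_zero_of_ne (hx : 0 ≤ x)
    (hr : 1 - 4 * r - 12 * x * r ^ 2 = 0) (hy : 1 - 4 * y - 12 * x * y ^ 2 = 0) (hne : y ≠ r) :
    y < -r := by
  have hvieta : 4 + 12 * x * (r + y) = 0 := by
    have hfac : (r - y) * (4 + 12 * x * (r + y)) = 0 := by linear_combination hy - hr
    exact (mul_eq_zero.mp hfac).resolve_left (sub_ne_zero.mpr hne.symm)
  by_contra! hyr
  nlinarith [mul_nonneg hx (neg_le_iff_add_nonneg.mp hyr)]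

theorem one_sub_four_mul_one_div_two_sqrt_sq (hx : 0 < x) :
    1 - 4 * x * (1 / (2 * Real.sqrt x)) ^ 2 = 0 := by
  have hu : Real.sqrt x ^ 2 = x := Real.sq_sqrt hx.le
  have : Real.sqrt x ≠ 0 := (Real.sqrt_pos.mpr hx).ne'
  field_simp
  linear_combination 4 * hu

theorem one_sub_two_mul_sub_eq_zero_of_sq_eq {t : ℝ} (hx : x ≠ 0) (ht : t ^ 2 = 1 + 12 * x) :
    1 - 2 * ((t - 1) / (12 * x)) - 12 * x * ((t - 1) / (12 * x)) ^ 2 = 0 := by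
  field_simp
  linear_combination (-1) * ht

end Quadratics

/-- For each `x > 0`, the root `r(x) = 1/(2(1+√(1+3x)))` of `1 - 4y - 12xy² = 0` is a root
of `B(x,·) = (1-4xy²)(1-4y-12xy²)(1-2y-12xy²)` and has strictly smaller absolute value than
every other root of `B(x,·)`. -/
theorem stmt_10 (x : ℝ) (hx : 0 < x) (r : ℝ)
    (hr : r = 1 / (2 * (1 + Real.sqrt (1 + 3 * x)))) :
    (1 - 4 * r - 12 * x * r ^ 2 = 0) ∧
    (1 - 4 * x * r ^ 2) * (1 - 4 * r - 12 * x * r ^ 2) * (1 - 2 * r - 12 * x * r ^ 2) = 0 ∧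
    ∀ y : ℝ,
      (y = 1 / (2 * Real.sqrt x) ∨ y = -(1 / (2 * Real.sqrt x)) ∨
        y = (Real.sqrt (1 + 12 * x) - 1) / (12 * x) ∨
        y = (-Real.sqrt (1 + 12 * x) - 1) / (12 * x) ∨
        (1 - 4 * y - 12 * x * y ^ 2 = 0 ∧ y ≠ r)) →
      |r| < |y| := by
  have hr0 : 0 < r := hr ▸ by positivity
  have hqr : 1 - 4 * r - 12 * x * r ^ 2 = 0 :=
    quadratic_eq_zero_of_eq_one_div_two_one_add_sqrt (by linarith) hr
  refine ⟨hqr, by rw [hqr, mul_zero, zero_mul], fun y hy => ?_⟩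
  rw [abs_of_pos hr0]
  have hsqrt : Real.sqrt (1 + 12 * x) ^ 2 = 1 + 12 * x := Real.sq_sqrt (by linarith)
  have hdominates : 1 - 4 * |y| - 12 * x * |y| ^ 2 < 0 → r < |y| :=
    lt_of_quadratic_eq_zero_of_quadratic_neg hx.le (abs_nonneg y) hqr
  rcases hy with rfl | rfl | rfl | rfl | ⟨hy, hne⟩
  · exact hdominates (quadratic_abs_neg_of_one_sub_four_mul_sq_eq_zero
      (one_sub_four_mul_one_div_two_sqrt_sq hx))
  · exact hdominates (quadratic_abs_neg_of_one_sub_four_mul_sq_eq_zero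
      (neg_sq (1 / (2 * Real.sqrt x)) ▸ one_sub_four_mul_one_div_two_sqrt_sq hx))
  · exact hdominates (quadratic_abs_neg_of_one_sub_two_mul_sub_eq_zero
      (one_sub_two_mul_sub_eq_zero_of_sq_eq hx.ne' hsqrt))
  · exact hdominates (quadratic_abs_neg_of_one_sub_two_mul_sub_eq_zero
      (one_sub_two_mul_sub_eq_zero_of_sq_eq hx.ne' ((neg_sq (Real.sqrt (1 + 12 * x))).trans hsqrt)))
  · have hyr := lt_neg_of_quadratic_eq_zero_of_ne hx.le hqr hy hne
    rw [abs_of_neg (by linarith)]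
    linarith
end
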